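/- arXiv:1801.04761 — 2 statements merged into one kernel-verified Lean document; each statement's English description precedes it below -/
import Mathlib

section
/- Let ω_max ∈ [0, 1/2] and c = cos²(π ω_max). For γ ∈ ℝ and ω ∈ ℝ define R_γ(ω) = (1-γ) + γ·cos(2π(1/2 - ω)). Then for every γ ∈ ℝ, sup_{ω ∈ [-ω_max, ω_max]} |R_γ(ω)| = max{|1 - 2γ|, |1 - 2γ c|}. -/
open Real

theorem stmt_5 (ωmax : ℝ) (hω : ωmax ∈ Set.Icc (0 : ℝ) (1 / 2))
    (c : ℝ) (hc : c = Real.cos (π * ωmax) ^ 2)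
    (R : ℝ → ℝ → ℝ)
    (hR : ∀ γ ω : ℝ, R γ ω = (1 - γ) + γ * Real.cos (2 * π * (1 / 2 - ω))) :
    ∀ γ : ℝ,
      sSup ((fun ω => |R γ ω|) '' Set.Icc (-ωmax) ωmax) =
        max |1 - 2 * γ| |1 - 2 * γ * c| := by
  obtain ⟨hω0, hω2⟩ := hω
  intro γ
  have hπ := Real.pi_pos
  have hR' : ∀ ω : ℝ, R γ ω = (1 - γ) - γ * Real.cos (2 * π * ω) := by
    intro ω
    rw [hR]
    have h : 2 * π * (1 / 2 - ω) = π - 2 * π * ω := by ring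
    rw [h, Real.cos_pi_sub]
    ring
  have hcmax : Real.cos (2 * π * ωmax) = 2 * c - 1 := by
    have h : 2 * π * ωmax = 2 * (π * ωmax) := by ring
    rw [h, Real.cos_two_mul, hc]
  have hR0 : R γ 0 = 1 - 2 * γ := by
    rw [hR']
    simp [Real.cos_pi]
    ring
  have hRm : R γ ωmax = 1 - 2 * γ * c := by
    rw [hR', hcmax]; ring
  -- bounds on cos
  have hub : ∀ ω ∈ Set.Icc (-ωmax) ωmax,
      |R γ ω| ≤ max |1 - 2 * γ| |1 - 2 * γ * c| := by
    rintro ω ⟨h1, h2⟩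
    have habs : |ω| ≤ ωmax := abs_le.mpr ⟨h1, h2⟩
    have ht1 : Real.cos (2 * π * ω) ≤ 1 := Real.cos_le_one _
    have ht0 : 2 * c - 1 ≤ Real.cos (2 * π * ω) := by
      rw [← hcmax]
      have hcos : Real.cos (2 * π * ω) = Real.cos (2 * π * |ω|) := by
        rcases abs_cases ω with ⟨h, _⟩ | ⟨h, _⟩
        · rw [h]
        · rw [h]; rw [show 2 * π * -ω = -(2 * π * ω) by ring, Real.cos_neg]
      rw [hcos]
      apply Real.cos_le_cos_of_nonneg_of_le_pi
      · positivity
      · nlinarith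
      · nlinarith [abs_nonneg ω]
    rw [hR']
    set t := Real.cos (2 * π * ω)
    rcases le_total 0 γ with hγ | hγ
    · have hlo : 1 - 2 * γ ≤ (1 - γ) - γ * t := by nlinarith
      have hhi : (1 - γ) - γ * t ≤ 1 - 2 * γ * c := by nlinarith
      exact le_trans (abs_le_max_abs_abs hlo hhi) (max_le_max le_rfl le_rfl)
    · have hlo : 1 - 2 * γ * c ≤ (1 - γ) - γ * t := by nlinarith
      have hhi : (1 - γ) - γ * t ≤ 1 - 2 * γ := by nlinarith
      calc |(1 - γ) - γ * t| ≤ max |1 - 2 * γ * c| |1 - 2 * γ| :=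
            abs_le_max_abs_abs hlo hhi
        _ = max |1 - 2 * γ| |1 - 2 * γ * c| := max_comm _ _
  apply IsGreatest.csSup_eq
  constructor
  · rcases le_total |1 - 2 * γ * c| |1 - 2 * γ| with h | h
    · refine ⟨0, ⟨by linarith, hω0⟩, ?_⟩
      simp [hR0, max_eq_left h]
    · refine ⟨ωmax, ⟨by linarith, le_rfl⟩, ?_⟩
      simp [hRm, max_eq_right h]
  · rintro x ⟨ω, hωmem, rfl⟩
    exact hub ω hωmem
end

section
/- Let s ≤ m be positive integers and X = {x₁,…,x_s} ⊂ [0,1) distinct points. Suppose for every u ∈ ℂ^s with |u_k| = 1 for all k, there exists a trigonometric polynomial Q_u of degree at most m with Q_u(x_k) = u_k for all k and |Q_u(ω)| < 1 for all ω ∉ X (modulo 1). Then there exist trigonometric polynomials P₁,…,P_s of degree at most m such that P_l(x_k) = δ_{lk}, P_l′(x_k) = 0 for all l, k, and ‖P_l‖_{L∞} = 1 for all l. -/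
open Real

/-- `Q` is a trigonometric polynomial of degree at most `m`. -/
def IsTrigPoly (m : ℕ) (Q : ℝ → ℂ) : Prop :=
  ∃ q : ℤ → ℂ, ∀ ω : ℝ, Q ω = ∑ k ∈ Finset.Icc (-(m : ℤ)) m,
    q k * Complex.exp (2 * π * Complex.I * k * ω)

lemma trig_conj_exp (k : ℤ) (ω : ℝ) :
    (starRingEnd ℂ) (Complex.exp (2 * π * Complex.I * k * ω))
      = Complex.exp (2 * π * Complex.I * (-k) * ω) := by
  rw [← Complex.exp_conj]
  congr 1
  simp only [map_mul, Complex.conj_I, Complex.conj_ofReal, map_intCast, map_ofNat]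
  ring

lemma trig_periodic {m : ℕ} {Q : ℝ → ℂ} (hQ : IsTrigPoly m Q) (y : ℝ) (p : ℤ) :
    Q (y + p) = Q y := by
  obtain ⟨q, hq⟩ := hQ
  rw [hq, hq]
  refine Finset.sum_congr rfl fun k _ => ?_
  congr 1
  rw [show (2 * (π:ℂ) * Complex.I * k * ((y : ℝ) + (p:ℤ) : ℝ) : ℂ)
      = 2 * π * Complex.I * k * (y:ℝ) + (k * p : ℤ) * (2 * π * Complex.I) by
    push_cast; ring, Complex.exp_add, Complex.exp_int_mul_two_pi_mul_I, mul_one]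

lemma trig_differentiable {m : ℕ} {Q : ℝ → ℂ} (hQ : IsTrigPoly m Q) :
    Differentiable ℝ Q := by
  obtain ⟨q, hq⟩ := hQ
  have : Q = fun ω : ℝ => ∑ k ∈ Finset.Icc (-(m : ℤ)) m,
      q k * Complex.exp (2 * π * Complex.I * k * ω) := funext hq
  rw [this]
  refine Differentiable.fun_sum fun k _ => Differentiable.const_mul ?_ (q k)
  intro ω
  exact (((hasDerivAt_id ω).ofReal_comp).const_mul ((2 : ℂ) * π * Complex.I * k)).cexp.differentiableAt

lemma trig_symm {m : ℕ} {Q : ℝ → ℂ} (hQ : IsTrigPoly m Q) :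
    IsTrigPoly m (fun ω => ((2 : ℂ) + Q ω + (starRingEnd ℂ) (Q ω)) / 4) := by
  obtain ⟨q, hq⟩ := hQ
  refine ⟨fun k => ((if k = 0 then (2:ℂ) else 0) + q k + (starRingEnd ℂ) (q (-k))) / 4,
    fun ω => ?_⟩
  have h2 : (2 : ℂ) = ∑ k ∈ Finset.Icc (-(m : ℤ)) m,
      (if k = 0 then (2:ℂ) else 0) * Complex.exp (2 * π * Complex.I * k * ω) := by
    have hite : ∀ k : ℤ, (if k = 0 then (2:ℂ) else 0) * Complex.exp (2 * π * Complex.I * k * ω)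
        = if k = 0 then (fun k : ℤ => (2:ℂ) * Complex.exp (2 * π * Complex.I * k * ω)) k else 0 := by
      intro k; split <;> simp
    rw [Finset.sum_congr rfl fun k _ => hite k, Finset.sum_ite_eq']
    simp [Finset.mem_Icc]
  have h3 : (starRingEnd ℂ) (Q ω) = ∑ k ∈ Finset.Icc (-(m : ℤ)) m,
      (starRingEnd ℂ) (q (-k)) * Complex.exp (2 * π * Complex.I * k * ω) := by
    rw [hq, map_sum]
    refine Finset.sum_nbij' (fun k => -k) (fun k => -k) ?_ ?_ ?_ ?_ ?_
    · intro a ha; simp at ha ⊢; omega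
    · intro a ha; simp at ha ⊢; omega
    · intro a _; ring
    · intro a _; ring
    · intro a _
      rw [map_mul, trig_conj_exp]
      simp
  calc ((2 : ℂ) + Q ω + (starRingEnd ℂ) (Q ω)) / 4
      = (∑ k ∈ Finset.Icc (-(m : ℤ)) m,
          (if k = 0 then (2:ℂ) else 0) * Complex.exp (2 * π * Complex.I * k * ω)
        + ∑ k ∈ Finset.Icc (-(m : ℤ)) m,
          q k * Complex.exp (2 * π * Complex.I * k * ω)
        + ∑ k ∈ Finset.Icc (-(m : ℤ)) m,
          (starRingEnd ℂ) (q (-k)) * Complex.exp (2 * π * Complex.I * k * ω)) / 4 := by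
        rw [← h2, ← h3, ← hq]
    _ = _ := by
        rw [← Finset.sum_add_distrib, ← Finset.sum_add_distrib, Finset.sum_div]
        refine Finset.sum_congr rfl fun k _ => ?_
        ring

theorem stmt_8 (s m : ℕ) (hs : 0 < s) (hsm : s ≤ m)
    (x : Fin s → ℝ) (hx : ∀ k, x k ∈ Set.Ico (0 : ℝ) 1) (hinj : Function.Injective x)
    (h : ∀ u : Fin s → ℂ, (∀ k, ‖u k‖ = 1) →
      ∃ Q : ℝ → ℂ, IsTrigPoly m Q ∧ (∀ k, Q (x k) = u k) ∧
        ∀ ω : ℝ, (∀ k, ¬ ∃ p : ℤ, ω - x k = p) → ‖Q ω‖ < 1) :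
    ∃ P : Fin s → (ℝ → ℂ),
      (∀ l, IsTrigPoly m (P l)) ∧
      (∀ l k, P l (x k) = if l = k then 1 else 0) ∧
      (∀ l k, deriv (P l) (x k) = 0) ∧
      (∀ l, sSup ((fun ω => ‖P l ω‖) '' Set.Ico (0 : ℝ) 1) = 1) := by
  have hu : ∀ l : Fin s, ∀ k, ‖(fun k => if k = l then (1:ℂ) else -1) k‖ = 1 := by
    intro l k; by_cases hk : k = l <;> simp [hk]
  choose Q hT hV hB using fun l => h (fun k => if k = l then (1:ℂ) else -1) (hu l)
  -- uniform bound
  have habs : ∀ l ω, ‖Q l ω‖ ≤ 1 := by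
    intro l ω
    by_cases hc : ∀ k, ¬ ∃ p : ℤ, ω - x k = p
    · exact (hB l ω hc).le
    · push_neg at hc
      obtain ⟨k, p, hp⟩ := hc
      have hω : ω = x k + p := by linarith
      rw [hω, trig_periodic (hT l), hV l k]
      by_cases hk : k = l <;> simp [hk]
  set g : Fin s → ℝ → ℝ := fun l ω => (1 + (Q l ω).re) / 2 with hg
  set P : Fin s → ℝ → ℂ := fun l ω => ((g l ω : ℝ) : ℂ) with hP
  have hPg : ∀ l ω, P l ω = ((2 : ℂ) + Q l ω + (starRingEnd ℂ) (Q l ω)) / 4 := by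
    intro l ω
    rw [hP, hg]
    simp only
    rw [add_assoc, Complex.add_conj]
    push_cast
    ring
  have hg01 : ∀ l ω, 0 ≤ g l ω ∧ g l ω ≤ 1 := by
    intro l ω
    have h1 := Complex.abs_re_le_norm (Q l ω)
    have h2 := habs l ω
    rw [abs_le] at h1
    constructor <;> simp only [hg] <;> nlinarith [h1.1, h1.2]
  have hgx : ∀ l k, g l (x k) = if l = k then 1 else 0 := by
    intro l k
    simp only [hg]
    rw [hV l k]
    by_cases hk : k = l
    · subst hk; simp
    · have : ¬ l = k := fun hh => hk hh.symm
      simp [hk, this]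
  have hgdiff : ∀ l, Differentiable ℝ (g l) := by
    intro l
    have hq := trig_differentiable (hT l)
    have : Differentiable ℝ fun ω => (Q l ω).re :=
      Complex.reCLM.differentiable.comp hq
    simpa only [hg] using (this.const_add 1).div_const 2
  have hderivP : ∀ l ω, deriv (P l) ω = ((deriv (g l) ω : ℝ) : ℂ) := by
    intro l ω
    exact (((hgdiff l ω).hasDerivAt).ofReal_comp).deriv
  refine ⟨P, ?_, ?_, ?_, ?_⟩
  · intro l
    have := trig_symm (hT l)
    have hPe : P l = fun ω => ((2 : ℂ) + Q l ω + (starRingEnd ℂ) (Q l ω)) / 4 :=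
      funext (hPg l)
    rw [hPe]
    exact this
  · intro l k
    rw [hP]
    simp only
    rw [hgx l k]
    by_cases hk : l = k <;> simp [hk]
  · intro l k
    rw [hderivP]
    by_cases hk : l = k
    · subst hk
      have hmax : IsLocalMax (g l) (x l) := by
        refine Filter.Eventually.of_forall fun ω => ?_
        rw [hgx l l]
        simp [(hg01 l ω).2]
      rw [hmax.deriv_eq_zero]; simp
    · have hmin : IsLocalMin (g l) (x k) := by
        refine Filter.Eventually.of_forall fun ω => ?_
        rw [hgx l k]
        simp [hk, (hg01 l ω).1]
      rw [hmin.deriv_eq_zero]; simp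
  · intro l
    have hmem : (1 : ℝ) ∈ (fun ω => ‖P l ω‖) '' Set.Ico (0 : ℝ) 1 := by
      refine ⟨x l, hx l, ?_⟩
      rw [hP]
      simp only
      rw [hgx l l]
      simp
    have hub : ∀ a ∈ (fun ω => ‖P l ω‖) '' Set.Ico (0 : ℝ) 1, a ≤ 1 := by
      rintro a ⟨ω, -, rfl⟩
      rw [hP]
      simp only [Complex.norm_real, Real.norm_eq_abs]
      rw [abs_of_nonneg (hg01 l ω).1]
      exact (hg01 l ω).2
    exact le_antisymm (csSup_le ⟨1, hmem⟩ hub) (le_csSup ⟨1, hub⟩ hmem)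
end
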